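/- arXiv:2308.11352 — 7 statements merged into one kernel-verified Lean document; each statement's English description precedes it below -/
import Mathlib

section
/- For all real x, y with 0 ≤ x ≤ 1 and 0 ≤ y ≤ 1 - x², we have (1/768)·(x⁴ + 48y² + 36x²y + 24x(1 - x² - y²/(1+x))) ≤ 1/16. -/
theorem stmt_0 (x y : ℝ) (hx0 : 0 ≤ x) (hx1 : x ≤ 1) (hy0 : 0 ≤ y)
    (hy1 : y ≤ 1 - x^2) :
    (1/768) * (x^4 + 48*y^2 + 36*x^2*y + 24*x*(1 - x^2 - y^2/(1+x))) ≤ 1/16 := by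
  have hx : (0:ℝ) < 1 + x := by linarith
  have e : 24*x*(1 - x^2 - y^2/(1+x)) = (24*x*((1-x^2)*(1+x) - y^2))/(1+x) := by
    field_simp
  have h : (24*x*((1-x^2)*(1+x) - y^2))/(1+x) ≤ 48 - (x^4 + 48*y^2 + 36*x^2*y) := by
    rw [div_le_iff₀ hx]
    nlinarith [sq_nonneg (1 - x^2 - y), sq_nonneg (x*y), sq_nonneg (x - x^2),
      mul_nonneg hy0 hx0, mul_nonneg (mul_nonneg hy0 hy0) hx0,
      sq_nonneg (1 - x), sq_nonneg y, sq_nonneg x,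
      mul_nonneg (sub_nonneg.2 hy1) hy0,
      mul_nonneg (mul_nonneg (sub_nonneg.2 hy1) hy0) hx0,
      mul_nonneg (sub_nonneg.2 hx1) (sub_nonneg.2 hy1),
      mul_nonneg (mul_nonneg (sub_nonneg.2 hx1) (sub_nonneg.2 hy1)) hy0]
  linarith [e, h]
end

section
/- For all real x, y with 0 ≤ x ≤ 1 and 0 ≤ y ≤ 1 - x², we have (1/96)·(x⁴ + 18x²y + 24y² + 12x(1 - x² - y²/(1+x))) ≤ 1/4. -/
theorem stmt_3 (x y : ℝ) (hx0 : 0 ≤ x) (hx1 : x ≤ 1) (hy0 : 0 ≤ y)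
    (hy1 : y ≤ 1 - x^2) :
    (1/96) * (x^4 + 18*x^2*y + 24*y^2 + 12*x*(1 - x^2 - y^2/(1+x))) ≤ 1/4 := by
  have h1 : (0:ℝ) < 1 + x := by linarith
  have hdiv : y^2/(1+x) = y^2/(1+x) := rfl
  have key : (1+x) * (x^4 + 18*x^2*y + 24*y^2 + 12*x*(1 - x^2)) - 12*x*y^2 ≤ 24*(1+x) := by
    nlinarith [mul_nonneg hy0 (by linarith : (0:ℝ) ≤ 1 - x^2 - y),
      mul_nonneg (mul_nonneg hy0 (by linarith : (0:ℝ) ≤ 1 - x^2 - y)) hx0,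
      mul_nonneg (mul_nonneg hx0 hx0) (by nlinarith : (0:ℝ) ≤ (x+1)*(5*x^2+18)),
      mul_nonneg (mul_nonneg hy0 (by linarith : (0:ℝ) ≤ 1 - x^2 - y)) h1.le,
      sq_nonneg x, sq_nonneg y, mul_nonneg hx0 hy0]
  have hc : y^2/(1+x) * (1+x) = y^2 := div_mul_cancel₀ _ h1.ne'
  have h2 : (x^4 + 18*x^2*y + 24*y^2 + 12*x*(1 - x^2 - y^2/(1+x))) * (1+x) ≤ 24 * (1+x) := by
    nlinarith [key, hc]
  have h3 : x^4 + 18*x^2*y + 24*y^2 + 12*x*(1 - x^2 - y^2/(1+x)) ≤ 24 :=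
    le_of_mul_le_mul_right (by linarith) h1
  linarith
end

section
/- For all real p, x, y with 0 ≤ p ≤ 2, 0 ≤ x ≤ 1, 0 ≤ y ≤ 1, the quantity (1/393216)·(38p⁴ + 48p²(4 - p²)(x + 4x²) + 384py(4 - p²)(1 - x²) + 384(4 - p²)²x²) is at most 1/64. -/
theorem stmt_10 (p x y : ℝ) (hp0 : 0 ≤ p) (hp2 : p ≤ 2)
    (hx0 : 0 ≤ x) (hx1 : x ≤ 1) (hy0 : 0 ≤ y) (hy1 : y ≤ 1) :
    (1/393216) * (38*p^4 + 48*p^2*(4 - p^2)*(x + 4*x^2)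
      + 384*p*y*(4 - p^2)*(1 - x^2) + 384*(4 - p^2)^2*x^2) ≤ 1/64 := by
  have h4 : 0 ≤ 4 - p^2 := by nlinarith
  have hx2 : x^2 ≤ 1 := by nlinarith
  have hy : 384*p*y*(4 - p^2)*(1 - x^2) ≤ 384*p*(4 - p^2)*(1 - x^2) := by
    nlinarith [mul_nonneg (mul_nonneg hp0 h4) (sub_nonneg.2 hx2)]
  have key : 38*p^4 + 48*p^2*(4 - p^2)*(x + 4*x^2)
      + 384*p*(4 - p^2)*(1 - x^2) + 384*(4 - p^2)^2*x^2 ≤ 6144 := by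
    nlinarith [mul_nonneg (mul_nonneg (sq_nonneg p) h4) (sub_nonneg.2 hx1),
      mul_nonneg (mul_nonneg (sq_nonneg p) h4) (sub_nonneg.2 hx2),
      mul_nonneg (mul_nonneg hp0 h4) (sub_nonneg.2 hx2),
      mul_nonneg h4 h4, sq_nonneg (2 - p), sq_nonneg (1 - x),
      mul_nonneg (mul_nonneg h4 h4) (sub_nonneg.2 hx2),
      mul_nonneg hx0 h4, sq_nonneg (p*(2-p))]
  linarith
end

section
/- For all real x, y with 0 ≤ x ≤ 1 and 0 ≤ y ≤ 1 - x², we have (1/512)·(x⁴ + 12x²y + 32y² + 16x(1 - x² - y²/(1+x))) ≤ 1/16. -/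
theorem stmt_12 (x y : ℝ) (hx0 : 0 ≤ x) (hx1 : x ≤ 1) (hy0 : 0 ≤ y)
    (hy1 : y ≤ 1 - x^2) :
    (1/512) * (x^4 + 12*x^2*y + 32*y^2 + 16*x*(1 - x^2 - y^2/(1+x))) ≤ 1/16 := by
  have hpos : (0:ℝ) < 1 + x := by linarith
  have hdiv : y^2*(1-x) ≤ y^2/(1+x) := by
    rw [le_div_iff₀ hpos]
    nlinarith [sq_nonneg y, sq_nonneg (x*y)]
  have key : x^4 + 12*x^2*y + 32*y^2 + 16*x*(1 - x^2 - y^2*(1-x)) ≤ 32 := by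
    nlinarith [mul_nonneg hx0 (sub_nonneg.2 hy1), mul_nonneg hy0 (sub_nonneg.2 hy1),
      mul_nonneg (mul_nonneg hx0 hx0) (sub_nonneg.2 hy1),
      mul_nonneg (mul_nonneg hx0 hy0) (sub_nonneg.2 hy1),
      sq_nonneg (1 - x^2 - y), mul_nonneg hx0 (sq_nonneg (1 - x^2 - y)),
      mul_nonneg hx0 hy0, sq_nonneg (x - x^2), sq_nonneg (y - 1),
      mul_nonneg (mul_nonneg hx0 hx0) hy0, mul_nonneg hy0 hy0,
      mul_nonneg (sub_nonneg.2 hx1) (sq_nonneg y),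
      mul_nonneg (mul_nonneg hx0 (sub_nonneg.2 hx1)) (sq_nonneg y)]
  have hx' : 16*x*(1 - x^2 - y^2/(1+x)) ≤ 16*x*(1 - x^2 - y^2*(1-x)) := by
    have h16 : (0:ℝ) ≤ 16*x := by linarith
    apply mul_le_mul_of_nonneg_left _ h16
    linarith
  linarith
end

section
/- For all real x, y with 0 ≤ x ≤ 1 and 0 ≤ y ≤ 1 - x², we have (1/512)·(3x⁴ + 4x²y + 32y² + 16x(1 - x² - y²/(1+x))) ≤ 1/16. -/
theorem stmt_13 (x y : ℝ) (hx0 : 0 ≤ x) (hx1 : x ≤ 1) (hy0 : 0 ≤ y)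
    (hy1 : y ≤ 1 - x^2) :
    (1/512) * (3*x^4 + 4*x^2*y + 32*y^2 + 16*x*(1 - x^2 - y^2/(1+x))) ≤ 1/16 := by
  have hpos : (0:ℝ) < 1 + x := by linarith
  have ht : y^2/(1+x) * (1+x) = y^2 := div_mul_cancel₀ _ hpos.ne'
  have hdiv : 0 ≤ y^2 / (1+x) := div_nonneg (sq_nonneg y) hpos.le
  nlinarith [ht, mul_pos hpos hpos, sq_nonneg (1-x^2-y), sq_nonneg y, sq_nonneg x,
    mul_nonneg hx0 hy0, mul_nonneg (mul_nonneg hx0 hx0) hy0,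
    mul_nonneg hx0 (sq_nonneg (1-x^2-y)), mul_nonneg hy0 (sq_nonneg (1-x)),
    mul_nonneg hx0 hdiv, mul_nonneg (mul_nonneg hx0 hx0) (sq_nonneg (1-x)),
    mul_nonneg (mul_nonneg hy0 hy0) hx0, sq_nonneg (x*(1-x))]
end

section
/- For all real x, y with 0 ≤ x ≤ 1 and 0 ≤ y ≤ 1 - x², the quantity (1/16384)·(19x⁶ + 200x⁴y + 688x²y² + 768y³ + 32x³(1 - x² - y²/(1+x)) + 128xy(1 - x² - y²/(1+x)) + 256(1 - x² - y²/(1+x))² + 128x²(1 - x² - y²) + 512y(1 - x² - y²)) is at most 3/64. -/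
set_option maxHeartbeats 1000000 in
private lemma key15 (x w : ℝ) (hx0 : 0 ≤ x) (hx1 : x ≤ 1) (hw0 : 0 ≤ w) (hw1 : w ≤ 1 - x^2) :
    0 ≤ 1280*w - 1792*w^2 + 1280*w^3 - 256*w^4 + 1280*x*w - 640*x*w^2 + 384*x*w^3
      + 720*x^2 - 800*x^2*w + 2384*x^2*w^2 - 896*x^2*w^3 + 1440*x^3 + 896*x^3*w
      - 448*x^3*w^2 + 1224*x^4 + 1416*x^4*w - 1680*x^4*w^2 + 1008*x^5 - 1776*x^5*w
      + 29*x^6 - 1496*x^6*w - 950*x^7 - 475*x^8 := by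
  nlinarith [mul_nonneg hx0 hw0, mul_nonneg (mul_nonneg hx0 hx0) hw0, sq_nonneg (x*w), sq_nonneg (x+w), sq_nonneg (x-w), mul_nonneg hw0 (sub_nonneg.2 hw1), mul_nonneg hx0 (sub_nonneg.2 hw1), mul_nonneg (mul_nonneg hx0 hx0) (sub_nonneg.2 hw1), mul_nonneg (sub_nonneg.2 hx1) hw0, mul_nonneg (mul_nonneg (sub_nonneg.2 hx1) hx0) hw0, sq_nonneg (1-x), sq_nonneg w, mul_nonneg (mul_nonneg hw0 hw0) (sub_nonneg.2 hw1), mul_nonneg (mul_nonneg hx0 hw0) (sub_nonneg.2 hw1), mul_nonneg (mul_nonneg (mul_nonneg hx0 hx0) (mul_nonneg hx0 hx0)) (sub_nonneg.2 hw1), mul_nonneg (mul_nonneg (mul_nonneg hx0 hx0) (mul_nonneg hx0 hx0)) (mul_nonneg hx0 (sub_nonneg.2 hx1))]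

theorem stmt_15 (x y : ℝ) (hx0 : 0 ≤ x) (hx1 : x ≤ 1) (hy0 : 0 ≤ y)
    (hy1 : y ≤ 1 - x^2) :
    (1/16384) * (19*x^6 + 200*x^4*y + 688*x^2*y^2 + 768*y^3
      + 32*x^3*(1 - x^2 - y^2/(1+x))
      + 128*x*y*(1 - x^2 - y^2/(1+x))
      + 256*(1 - x^2 - y^2/(1+x))^2
      + 128*x^2*(1 - x^2 - y^2)
      + 512*y*(1 - x^2 - y^2)) ≤ 3/64 := by
  have hden : (0:ℝ) < 1 + x := by linarith
  have hd2 : (0:ℝ) < (1+x)^2 := by positivity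
  have hkey := key15 x (1 - x^2 - y) hx0 hx1 (by linarith) (by linarith)
  set E := 19*x^6 + 200*x^4*y + 688*x^2*y^2 + 768*y^3
      + 32*x^3*(1 - x^2 - y^2/(1+x))
      + 128*x*y*(1 - x^2 - y^2/(1+x))
      + 256*(1 - x^2 - y^2/(1+x))^2
      + 128*x^2*(1 - x^2 - y^2)
      + 512*y*(1 - x^2 - y^2) with hE
  have heq : E * (1+x)^2 = 768*(1+x)^2 - (512 - 512*y + 512*y^2 - 256*y^3 - 256*y^4
      + 1024*x - 1152*x*y + 512*x*y^2 - 384*x*y^3 + 896*x^2 - 256*x^2*y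
      - 1072*x^2*y^2 - 128*x^2*y^3 + 736*x^3 + 1024*x^3*y - 1600*x^3*y^2
      + 192*x^4 + 568*x^4*y - 528*x^4*y^2 - 256*x^5 - 272*x^5*y
      - 83*x^6 - 200*x^6*y - 6*x^7 - 19*x^8) := by
    rw [hE]
    field_simp
    ring
  have hE768 : E ≤ 768 := by
    have h2 : E * (1+x)^2 ≤ 768 * (1+x)^2 := by nlinarith [hkey, heq]
    exact le_of_mul_le_mul_right h2 hd2
  calc (1:ℝ)/16384 * E ≤ 1/16384 * 768 := by
        apply mul_le_mul_of_nonneg_left hE768; norm_num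
    _ = 3/64 := by norm_num
end

section
/- For all real p, x with 0 ≤ p ≤ 2 and 0 ≤ x ≤ 1, we have -1/16 ≤ (1/4096)·(-p⁴ + 64p² - 8p²(4 - p²)x - 16(4 - p²)²x²) and (1/4096)·(-p⁴ + 64p² + 8p²(4 - p²)x - 16(4 - p²)²x²) ≤ 15/256. -/
theorem stmt_17 (p x : ℝ) (hp0 : 0 ≤ p) (hp2 : p ≤ 2) (hx0 : 0 ≤ x) (hx1 : x ≤ 1) :
    -1/16 ≤ (1/4096) * (-p^4 + 64*p^2 - 8*p^2*(4 - p^2)*x - 16*(4 - p^2)^2*x^2) ∧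
    (1/4096) * (-p^4 + 64*p^2 + 8*p^2*(4 - p^2)*x - 16*(4 - p^2)^2*x^2) ≤ 15/256 := by
  have hq : p^2 ≤ 4 := by nlinarith
  have h1 : 0 ≤ (4 - p^2) * (1 - x) := by nlinarith
  have hu : 0 ≤ (4 - p^2) * x := by nlinarith
  constructor
  · nlinarith [mul_nonneg h1 (mul_nonneg hx0 (by nlinarith : (0:ℝ) ≤ 4 - p^2)),
      mul_nonneg h1 (sq_nonneg p), sq_nonneg p, mul_nonneg (sq_nonneg p) (by nlinarith : (0:ℝ) ≤ 4 - p^2),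
      mul_nonneg h1 h1, mul_nonneg h1 hu]
  · nlinarith [sq_nonneg (4*(4 - p^2)*x - p^2), mul_nonneg h1 h1, mul_nonneg h1 hu,
      mul_nonneg h1 (sq_nonneg p), mul_nonneg hu (sq_nonneg p), sq_nonneg (p^2 - 4),
      mul_nonneg (sq_nonneg (p^2 - 4)) hx0, mul_nonneg h1 (by nlinarith : (0:ℝ) ≤ 4 - p^2)]
end
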